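/- arXiv:2009.14628 — 6 statements merged into one kernel-verified Lean document; each statement's English description precedes it below -/
import Mathlib

section
/- For any feasible solution (x,y) of the LSNDP and any K-partition of the product set, the aggregated solution (x^Ξ, y, z), with x^{χ_k}(a) = Σ_{p ∈ P_k} x(a,p) and z equal to the total linear flow cost of x^Ξ, is feasible for the K-enhanced master problem K-EMP and has the same objective function value as (x,y). Consequently, the optimal value of K-EMP (without Benders cuts) is at most the optimal value of the LSNDP, i.e., K-EMP is a relaxation of the LSNDP. -/
open Finset

/-- Data of a Logistics Service Network Design Problem instance over a time-expanded
network.  `A` is the (finite) set of arcs (transportation and holding),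
`P` the products, `Wn` the warehouse-time nodes, `Cn` the customer-time nodes. -/
structure LsndpData (A P Wn Cn : Type) [Fintype A] [Fintype P] [Fintype Wn] [Fintype Cn] where
  /-- fixed vehicle cost on a transportation arc -/
  f : A → ℝ
  /-- per-unit flow cost on an arc -/
  c : A → ℝ
  /-- vehicle capacity û -/
  u : ℝ
  /-- arcs entering a warehouse-time node -/
  inW : Wn → Finset A
  /-- arcs leaving a warehouse-time node -/
  outW : Wn → Finset A
  /-- arcs entering a customer-time node -/
  inC : Cn → Finset A
  /-- the transportation arcs -/
  trans : Finset A
  /-- the holding (storage) arcs -/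
  hold : Finset A
  /-- storage capacity of a holding arc -/
  lim : A → ℝ
  /-- demand of product `p` at customer-time node `cn` -/
  d : P → Cn → ℝ
  /-- whether a flow variable for product `p` exists on arc `a`
  (arcs leaving a supplier `i` carry only products of `P^i`) -/
  avail : A → P → Prop

variable {A P Wn Cn : Type} [Fintype A] [Fintype P] [Fintype Wn] [Fintype Cn]

/-- Feasibility of `(x, y)` for the LSNDP: nonnegativity, availability,
flow conservation at warehouses, demand satisfaction, storage capacity, arc capacity. -/
def LsndpFeasible (D : LsndpData A P Wn Cn) (x : A → P → ℝ) (y : A → ℕ) : Prop :=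
  (∀ a p, 0 ≤ x a p) ∧
  (∀ a p, ¬ D.avail a p → x a p = 0) ∧
  (∀ v p, ∑ a ∈ D.inW v, x a p = ∑ a ∈ D.outW v, x a p) ∧
  (∀ cn p, D.d p cn ≤ ∑ a ∈ D.inC cn, x a p) ∧
  (∀ h ∈ D.hold, ∑ p, x h p ≤ D.lim h) ∧
  (∀ a ∈ D.trans, ∑ p, x a p ≤ D.u * (y a : ℝ))

/-- Total linear flow cost of a product flow. -/
def FlowCost (D : LsndpData A P Wn Cn) (x : A → P → ℝ) : ℝ :=
  ∑ a, ∑ p, D.c a * x a p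

/-- Objective of the LSNDP. -/
def LsndpObj (D : LsndpData A P Wn Cn) (x : A → P → ℝ) (y : A → ℕ) : ℝ :=
  (∑ a ∈ D.trans, D.f a * (y a : ℝ)) + FlowCost D x

/-- Optimal value of the LSNDP. -/
noncomputable def LsndpOpt (D : LsndpData A P Wn Cn) : ℝ :=
  sInf {v | ∃ x y, LsndpFeasible D x y ∧ LsndpObj D x y = v}

/-- A `K`-partition of the product set is encoded by a classifier `cls : P → K`;
the part `P_k` is the fiber `cls⁻¹(k)`.  Demand of super-product `χ_k`. -/
def Kdem {K : Type} [Fintype K] [DecidableEq K] (D : LsndpData A P Wn Cn)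
    (cls : P → K) (k : K) (cn : Cn) : ℝ :=
  ∑ p ∈ univ.filter (fun p => cls p = k), D.d p cn

/-- Super-product `χ_k` is available on arc `a` iff some product of `P_k` is. -/
def KAvail {K : Type} (D : LsndpData A P Wn Cn) (cls : P → K) (a : A) (k : K) : Prop :=
  ∃ p, cls p = k ∧ D.avail a p

/-- Total linear flow cost of a super-product flow. -/
def KFlowCost {K : Type} [Fintype K] (D : LsndpData A P Wn Cn) (x : A → K → ℝ) : ℝ :=
  ∑ a, ∑ k, D.c a * x a k

/-- Feasibility of `(x, y, z)` for the super-product master problem K-EMP. -/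
def KempFeasible {K : Type} [Fintype K] [DecidableEq K] (D : LsndpData A P Wn Cn)
    (cls : P → K) (x : A → K → ℝ) (y : A → ℕ) (z : ℝ) : Prop :=
  (∀ a k, 0 ≤ x a k) ∧
  (∀ a k, ¬ KAvail D cls a k → x a k = 0) ∧
  (∀ v k, ∑ a ∈ D.inW v, x a k = ∑ a ∈ D.outW v, x a k) ∧
  (∀ cn k, Kdem D cls k cn ≤ ∑ a ∈ D.inC cn, x a k) ∧
  (∀ h ∈ D.hold, ∑ k, x h k ≤ D.lim h) ∧
  (∀ a ∈ D.trans, ∑ k, x a k ≤ D.u * (y a : ℝ)) ∧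
  KFlowCost D x ≤ z

/-- Objective of the K-EMP. -/
def KempObj (D : LsndpData A P Wn Cn) (y : A → ℕ) (z : ℝ) : ℝ :=
  (∑ a ∈ D.trans, D.f a * (y a : ℝ)) + z

/-- Optimal value of the K-EMP. -/
noncomputable def KempOpt {K : Type} [Fintype K] [DecidableEq K]
    (D : LsndpData A P Wn Cn) (cls : P → K) : ℝ :=
  sInf {v | ∃ x y z, KempFeasible D cls x y z ∧ KempObj D y z = v}

/-- Aggregation of a product flow into a super-product flow:
`x^{χ_k}(a) = ∑_{p ∈ P_k} x(a,p)`. -/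
def aggFlow {K : Type} [Fintype K] [DecidableEq K]
    (cls : P → K) (x : A → P → ℝ) : A → K → ℝ :=
  fun a k => ∑ p ∈ univ.filter (fun p => cls p = k), x a p

/-- **Theorem 1 (K-EMP is a relaxation of the LSNDP).**
For any feasible solution `(x,y)` of the LSNDP and any K-partition (classifier
`cls`), the aggregated solution `(x^Ξ, y, z)`, with
`x^{χ_k}(a) = ∑_{p ∈ P_k} x(a,p)` and `z` equal to the total linear flow cost of
`x^Ξ`, is feasible for the K-EMP and has the same objective value as `(x,y)`.
Consequently, the optimal value of the K-EMP is at most that of the LSNDP. -/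
theorem kemp_relaxation {A P Wn Cn : Type}
    [Fintype A] [Fintype P] [Fintype Wn] [Fintype Cn]
    {K : Type} [Fintype K] [DecidableEq K]
    (D : LsndpData A P Wn Cn) (cls : P → K)
    (hf : ∀ a, 0 ≤ D.f a) (hc : ∀ a, 0 ≤ D.c a)
    (hfeas : ∃ x y, LsndpFeasible D x y) :
    (∀ x y, LsndpFeasible D x y →
      KempFeasible D cls (aggFlow cls x) y (KFlowCost D (aggFlow cls x)) ∧
      KempObj D y (KFlowCost D (aggFlow cls x)) = LsndpObj D x y) ∧
    KempOpt D cls ≤ LsndpOpt D := by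
  have fiber : ∀ (g : P → ℝ),
      ∑ k, ∑ p ∈ univ.filter (fun p => cls p = k), g p = ∑ p, g p := by
    intro g; rw [Finset.sum_fiberwise]
  have hmain : ∀ x y, LsndpFeasible D x y →
      KempFeasible D cls (aggFlow cls x) y (KFlowCost D (aggFlow cls x)) ∧
      KempObj D y (KFlowCost D (aggFlow cls x)) = LsndpObj D x y := by
    intro x y hxy
    obtain ⟨hpos, hav, hcons, hdem, hstor, hcap⟩ := hxy
    have hflow : KFlowCost D (aggFlow cls x) = FlowCost D x := by
      unfold KFlowCost FlowCost aggFlow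
      refine Finset.sum_congr rfl fun a _ => ?_
      rw [← fiber (fun p => D.c a * x a p)]
      exact Finset.sum_congr rfl fun k _ => Finset.mul_sum _ _ _
    have hsumeq : ∀ a, ∑ k, aggFlow cls x a k = ∑ p, x a p := by
      intro a; exact fiber (fun p => x a p)
    refine ⟨⟨?_, ?_, ?_, ?_, ?_, ?_, le_of_eq rfl⟩, ?_⟩
    · intro a k
      exact Finset.sum_nonneg fun p _ => hpos a p
    · intro a k hk
      refine Finset.sum_eq_zero fun p hp => ?_
      simp only [Finset.mem_filter] at hp
      refine hav a p fun hap => hk ⟨p, hp.2, hap⟩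
    · intro v k
      unfold aggFlow
      exact Finset.sum_comm.trans
        ((Finset.sum_congr rfl fun p _ => hcons v p).trans Finset.sum_comm)
    · intro cn k
      unfold Kdem aggFlow
      exact le_trans (Finset.sum_le_sum fun p _ => hdem cn p)
        (le_of_eq Finset.sum_comm)
    · intro h hh
      rw [hsumeq]; exact hstor h hh
    · intro a ha
      rw [hsumeq]; exact hcap a ha
    · unfold KempObj LsndpObj
      rw [hflow]
  refine ⟨hmain, ?_⟩
  have hbdd : BddBelow {v | ∃ x y z, KempFeasible D cls x y z ∧ KempObj D y z = v} := by
    refine ⟨0, fun v hv => ?_⟩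
    obtain ⟨x, y, z, ⟨hpos, _, _, _, _, _, hz⟩, hobj⟩ := hv
    have h1 : (0:ℝ) ≤ ∑ a ∈ D.trans, D.f a * (y a : ℝ) :=
      Finset.sum_nonneg fun a _ => mul_nonneg (hf a) (Nat.cast_nonneg _)
    have h2 : (0:ℝ) ≤ KFlowCost D x :=
      Finset.sum_nonneg fun a _ => Finset.sum_nonneg fun k _ =>
        mul_nonneg (hc a) (hpos a k)
    rw [← hobj]; unfold KempObj
    linarith
  obtain ⟨x0, y0, hx0⟩ := hfeas
  refine csInf_le_csInf hbdd ⟨_, x0, y0, hx0, rfl⟩ ?_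
  rintro v ⟨x, y, hxy, hv⟩
  obtain ⟨hK, hobj⟩ := hmain x y hxy
  exact ⟨_, y, _, hK, hobj.trans hv⟩
end

section
/- Let {P_1,...,P_K} be a K-partition of the product set with K ≤ |P|−1 and with some subset P_K containing at least two products. Split P_K into two nonempty subsets P'_K and P'_{K+1} to form a (K+1)-partition {P_1,...,P_{K−1}, P'_K, P'_{K+1}}. Then every feasible solution of the resulting (K+1)-EMP maps, by summing the flows of the two new super-products, to a feasible solution of the K-EMP with the same objective value. Hence K-EMP is a relaxation of this (K+1)-EMP, and the optimal value of K-EMP is at most that of (K+1)-EMP. -/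
open Finset

variable {A P Wn Cn : Type} [Fintype A] [Fintype P] [Fintype Wn] [Fintype Cn]

lemma fiber_sum_aux {P K K' : Type} [Fintype P] [Fintype K'] [DecidableEq K] [DecidableEq K']
    (cls' : P → K') (g : K' → K) (k : K) (h : P → ℝ) :
    ∑ k' ∈ univ.filter (fun k' => g k' = k), ∑ p ∈ univ.filter (fun p => cls' p = k'), h p
      = ∑ p ∈ univ.filter (fun p => g (cls' p) = k), h p := by
  classical
  rw [← Finset.sum_fiberwise_of_maps_to (g := cls')
    (s := univ.filter (fun p => g (cls' p) = k)) (t := univ.filter (fun k' => g k' = k))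
    (fun p hp => by simp at hp ⊢; exact hp) h]
  refine Finset.sum_congr rfl fun k' hk' => Finset.sum_congr ?_ fun _ _ => rfl
  simp only [mem_filter, mem_univ, true_and] at hk'
  ext p
  simp only [mem_filter, mem_univ, true_and, Finset.filter_filter]
  constructor
  · intro hp; exact ⟨by rw [hp]; exact hk', hp⟩
  · exact fun hp => hp.2

/-- **Theorem 3 (splitting one part refines the master problem).**
Let a `(K+1)`-partition (classifier `cls' : P → K ⊕ Unit`) be obtained from a
`K`-partition (classifier `g ∘ cls'` where `g` merges `Sum.inr ()` into the part
`k₀`) by splitting the part `P_{k₀}` into two nonempty subsets.  Then every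
feasible solution of the (K+1)-EMP maps, by summing the flows of the two new
super-products, to a feasible solution of the K-EMP with the same `y` and `z`,
hence the same objective value.  Therefore the K-EMP is a relaxation of the
(K+1)-EMP and its optimal value is at most that of the (K+1)-EMP. -/
theorem kemp_split_relaxation {A P Wn Cn : Type}
    [Fintype A] [Fintype P] [Fintype Wn] [Fintype Cn]
    {K : Type} [Fintype K] [DecidableEq K]
    (D : LsndpData A P Wn Cn) (k0 : K) (cls' : P → K ⊕ Unit)
    (hne1 : ∃ p, cls' p = Sum.inl k0) (hne2 : ∃ p, cls' p = Sum.inr ())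
    (hf : ∀ a, 0 ≤ D.f a) (hc : ∀ a, 0 ≤ D.c a)
    (hfeas : ∃ x y z, KempFeasible D cls' x y z) :
    (∀ x y z, KempFeasible D cls' x y z →
      KempFeasible D (fun p => Sum.elim id (fun _ => k0) (cls' p))
        (fun a k => ∑ k' ∈ univ.filter (fun k' => Sum.elim id (fun _ => k0) k' = k), x a k')
        y z ∧
      KempObj D y z = KempObj D y z) ∧
    KempOpt D (fun p => Sum.elim id (fun _ => k0) (cls' p)) ≤ KempOpt D cls' := by
  classical
  set g : K ⊕ Unit → K := Sum.elim id (fun _ => k0) with hg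
  have key : ∀ x y z, KempFeasible D cls' x y z →
      KempFeasible D (fun p => g (cls' p))
        (fun a k => ∑ k' ∈ univ.filter (fun k' => g k' = k), x a k') y z := by
    intro x y z hxyz
    obtain ⟨h1, h2, h3, h4, h5, h6, h7⟩ := hxyz
    refine ⟨?_, ?_, ?_, ?_, ?_, ?_, ?_⟩
    · intro a k; exact Finset.sum_nonneg fun k' _ => h1 a k'
    · intro a k hk
      refine Finset.sum_eq_zero fun k' hk' => h2 a k' fun ⟨p, hp1, hp2⟩ => ?_
      simp only [mem_filter, mem_univ, true_and] at hk'
      exact hk ⟨p, by show g (cls' p) = k; rw [hp1]; exact hk', hp2⟩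
    · intro v k
      calc ∑ a ∈ D.inW v, ∑ k' ∈ univ.filter (fun k' => g k' = k), x a k'
          = ∑ k' ∈ univ.filter (fun k' => g k' = k), ∑ a ∈ D.inW v, x a k' := Finset.sum_comm
        _ = ∑ k' ∈ univ.filter (fun k' => g k' = k), ∑ a ∈ D.outW v, x a k' :=
            Finset.sum_congr rfl fun k' _ => h3 v k'
        _ = ∑ a ∈ D.outW v, ∑ k' ∈ univ.filter (fun k' => g k' = k), x a k' := Finset.sum_comm
    · intro cn k
      have hd : Kdem D (fun p => g (cls' p)) k cn
          = ∑ k' ∈ univ.filter (fun k' => g k' = k), Kdem D cls' k' cn := by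
        unfold Kdem
        rw [fiber_sum_aux cls' g k (fun p => D.d p cn)]
      rw [hd, Finset.sum_comm]
      exact Finset.sum_le_sum fun k' _ => h4 cn k'
    · intro h hh
      calc ∑ k, ∑ k' ∈ univ.filter (fun k' => g k' = k), x h k'
          = ∑ k', x h k' := Finset.sum_fiberwise univ g (x h)
        _ ≤ D.lim h := h5 h hh
    · intro a ha
      calc ∑ k, ∑ k' ∈ univ.filter (fun k' => g k' = k), x a k'
          = ∑ k', x a k' := Finset.sum_fiberwise univ g (x a)
        _ ≤ D.u * (y a) := h6 a ha
    · have hfc : KFlowCost D (fun a k => ∑ k' ∈ univ.filter (fun k' => g k' = k), x a k')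
          = KFlowCost D x := by
        unfold KFlowCost
        refine Finset.sum_congr rfl fun a _ => ?_
        rw [← Finset.sum_fiberwise univ g (fun k' => D.c a * x a k')]
        exact Finset.sum_congr rfl fun k _ => by simp only []; rw [Finset.mul_sum]
      rw [hfc]; exact h7
  refine ⟨fun x y z hxyz => ⟨key x y z hxyz, rfl⟩, ?_⟩
  apply csInf_le_csInf
  · refine ⟨0, fun v hv => ?_⟩
    obtain ⟨x, y, z, ⟨h1, _, _, _, _, _, h7⟩, hv⟩ := hv
    have hz : 0 ≤ z := le_trans (Finset.sum_nonneg fun a _ =>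
      Finset.sum_nonneg fun k _ => mul_nonneg (hc a) (h1 a k)) h7
    rw [← hv]
    exact add_nonneg (Finset.sum_nonneg fun a _ =>
      mul_nonneg (hf a) (Nat.cast_nonneg _)) hz
  · obtain ⟨x, y, z, hxyz⟩ := hfeas
    exact ⟨KempObj D y z, x, y, z, hxyz, rfl⟩
  · rintro v ⟨x, y, z, hxyz, hv⟩
    exact ⟨_, y, z, key x y z hxyz, hv⟩
end

section
/- The 1-EMP (master problem with a single super-product aggregating all of P) is a relaxation of every K-EMP obtained from any K-partition of P: any feasible solution of a K-EMP yields, by summing flows over all super-products, a feasible solution of the 1-EMP with the same objective value. Hence opt(1-EMP) ≤ opt(K-EMP) ≤ opt(LSNDP) for every partition. -/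
open Finset

variable {A P Wn Cn : Type} [Fintype A] [Fintype P] [Fintype Wn] [Fintype Cn]

lemma fiber_sum {P K : Type} [Fintype P] [Fintype K] [DecidableEq K]
    (cls : P → K) (f : P → ℝ) :
    ∑ k, ∑ p ∈ univ.filter (fun p => cls p = k), f p = ∑ p, f p := by
  simpa using Finset.sum_fiberwise_eq_sum_filter univ univ cls f

/-- Aggregating an LSNDP-feasible flow yields a K-EMP feasible solution. -/
lemma agg_feasible {A P Wn Cn : Type}
    [Fintype A] [Fintype P] [Fintype Wn] [Fintype Cn]
    {K : Type} [Fintype K] [DecidableEq K]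
    (D : LsndpData A P Wn Cn) (cls : P → K)
    {x : A → P → ℝ} {y : A → ℕ} (hx : LsndpFeasible D x y) :
    KempFeasible D cls (aggFlow cls x) y (FlowCost D x) := by
  obtain ⟨h0, hav, hcons, hdem, hstor, hcap⟩ := hx
  refine ⟨?_, ?_, ?_, ?_, ?_, ?_, ?_⟩
  · intro a k
    exact Finset.sum_nonneg fun p _ => h0 a p
  · intro a k hk
    refine Finset.sum_eq_zero fun p hp => ?_
    simp only [Finset.mem_filter] at hp
    exact hav a p fun hap => hk ⟨p, hp.2, hap⟩
  · intro v k
    simp only [aggFlow]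
    rw [Finset.sum_comm, Finset.sum_comm (s := D.outW v)]
    exact Finset.sum_congr rfl fun p _ => hcons v p
  · intro cn k
    simp only [aggFlow, Kdem]
    rw [Finset.sum_comm]
    exact Finset.sum_le_sum fun p _ => hdem cn p
  · intro h hh
    simp only [aggFlow]
    rw [fiber_sum]
    exact hstor h hh
  · intro a ha
    simp only [aggFlow]
    rw [fiber_sum]
    exact hcap a ha
  · simp only [KFlowCost, FlowCost, aggFlow]
    apply le_of_eq
    refine Finset.sum_congr rfl fun a _ => ?_
    simp_rw [Finset.mul_sum]
    exact fiber_sum cls fun p => D.c a * x a p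

/-- The 1-EMP (single super-product aggregating all of `P`, classifier into
`Unit`) is a relaxation of every K-EMP: any feasible solution of a K-EMP yields,
by summing flows over all super-products, a feasible solution of the 1-EMP with
the same `y` and `z`, hence the same objective value.  Consequently
`opt(1-EMP) ≤ opt(K-EMP) ≤ opt(LSNDP)` for every partition. -/
theorem one_emp_weakest {A P Wn Cn : Type}
    [Fintype A] [Fintype P] [Fintype Wn] [Fintype Cn]
    {K : Type} [Fintype K] [DecidableEq K]
    (D : LsndpData A P Wn Cn) (cls : P → K)
    (hf : ∀ a, 0 ≤ D.f a) (hc : ∀ a, 0 ≤ D.c a)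
    (hfeas : ∃ x y, LsndpFeasible D x y) :
    (∀ x y z, KempFeasible D cls x y z →
      KempFeasible D (fun _ : P => ()) (fun a _ => ∑ k, x a k) y z) ∧
    KempOpt D (fun _ : P => ()) ≤ KempOpt D cls ∧
    KempOpt D cls ≤ LsndpOpt D := by
  -- Part 1: aggregation over super-products.
  have part1 : ∀ x y z, KempFeasible D cls x y z →
      KempFeasible D (fun _ : P => ()) (fun a _ => ∑ k, x a k) y z := by
    intro x y z hx
    obtain ⟨h0, hav, hcons, hdem, hstor, hcap, hcost⟩ := hx
    refine ⟨?_, ?_, ?_, ?_, ?_, ?_, ?_⟩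
    · intro a _
      exact Finset.sum_nonneg fun k _ => h0 a k
    · intro a u hu
      refine Finset.sum_eq_zero fun k _ => ?_
      refine hav a k fun ⟨p, hpk, hap⟩ => hu ⟨p, rfl, hap⟩
    · intro v _
      rw [Finset.sum_comm, Finset.sum_comm (s := D.outW v)]
      exact Finset.sum_congr rfl fun k _ => hcons v k
    · intro cn u
      have h1 : Kdem D (fun _ : P => ()) u cn = ∑ k, Kdem D cls k cn := by
        simp only [Kdem]
        rw [fiber_sum]
        refine Finset.sum_congr ?_ fun _ _ => rfl
        simp
      rw [h1, Finset.sum_comm]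
      exact Finset.sum_le_sum fun k _ => hdem cn k
    · intro h hh
      simpa using hstor h hh
    · intro a ha
      simpa using hcap a ha
    · refine le_trans (le_of_eq ?_) hcost
      simp only [KFlowCost]
      refine Finset.sum_congr rfl fun a _ => ?_
      simp [Finset.mul_sum]
  -- Nonemptiness and boundedness facts.
  obtain ⟨x₀, y₀, hxy₀⟩ := hfeas
  have hKne : ∀ (K' : Type) (_ : Fintype K') (_ : DecidableEq K') (cls' : P → K'),
      {v | ∃ x y z, KempFeasible D cls' x y z ∧ KempObj D y z = v}.Nonempty := by
    intro K' _ _ cls'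
    exact ⟨_, aggFlow cls' x₀, y₀, FlowCost D x₀, agg_feasible D cls' hxy₀, rfl⟩
  have hKbdd : ∀ (K' : Type) (_ : Fintype K') (_ : DecidableEq K') (cls' : P → K'),
      BddBelow {v | ∃ x y z, KempFeasible D cls' x y z ∧ KempObj D y z = v} := by
    intro K' _ _ cls'
    refine ⟨0, fun v hv => ?_⟩
    obtain ⟨x, y, z, ⟨h0, _, _, _, _, _, hcost⟩, rfl⟩ := hv
    have hz : (0:ℝ) ≤ z := le_trans (Finset.sum_nonneg fun a _ =>
      Finset.sum_nonneg fun k _ => mul_nonneg (hc a) (h0 a k)) hcost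
    have hy : (0:ℝ) ≤ ∑ a ∈ D.trans, D.f a * (y a : ℝ) :=
      Finset.sum_nonneg fun a _ => mul_nonneg (hf a) (Nat.cast_nonneg _)
    exact add_nonneg hy hz
  refine ⟨part1, ?_, ?_⟩
  · -- 1-EMP ≤ K-EMP
    refine csInf_le_csInf (hKbdd Unit _ _ _) (hKne K _ _ cls) ?_
    rintro v ⟨x, y, z, hxyz, rfl⟩
    exact ⟨fun a _ => ∑ k, x a k, y, z, part1 x y z hxyz, rfl⟩
  · -- K-EMP ≤ LSNDP
    refine csInf_le_csInf (hKbdd K _ _ cls) ⟨_, x₀, y₀, hxy₀, rfl⟩ ?_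
    rintro v ⟨x, y, hxy, rfl⟩
    exact ⟨aggFlow cls x, y, FlowCost D x, agg_feasible D cls hxy, rfl⟩
end

section
/- Let x : A × P → ℝ≥0 be a nonnegative flow on a finite directed acyclic graph that satisfies flow conservation at every node outside a set S of sources and a set C of sinks, with all flow-carrying arcs lying on source-to-sink paths. Then x admits a path decomposition: there exist nonnegative weights γ_λ^p on directed paths λ from S to C such that for every arc a and product p, x(a,p) = Σ_{λ ∋ a} γ_λ^p. -/
open Finset

/-- A nonempty list of arcs is a directed source-to-sink path: consecutive arcs
are head-to-tail compatible, the first arc leaves a source of `S` and the last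
arc enters a sink of `C`. -/
def IsStPath {V A : Type} (tl hd : A → V) (S C : Finset V) : List A → Prop
  | [] => False
  | a :: rest =>
      tl a ∈ S ∧ List.Chain' (fun e f => hd e = tl f) (a :: rest) ∧
      hd ((a :: rest).getLast (List.cons_ne_nil a rest)) ∈ C

/-!
Each product is decomposed separately. A nonzero nonnegative conservative flow carries a
source-to-sink path of flow-carrying arcs: a flow-carrying arc whose tail has least rank must
leave a source (otherwise conservation at its tail yields a flow-carrying arc of smaller tail rank),
and from there conservation lets one follow flow-carrying arcs forward, with increasing rank, until
a sink is reached. Subtracting the least value of the flow along that path leaves a nonnegative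
conservative flow with strictly smaller support, so induction on the support size applies. All
products use the same finite set of source-to-sink paths, which are simple by acyclicity.
-/

theorem Finset.exists_pos_of_sum_eq {ι M : Type*} [AddCommMonoid M] [LinearOrder M]
    [IsOrderedAddMonoid M] {s t : Finset ι} {x : ι → M} (hx : 0 ≤ x) {i : ι} (hi : i ∈ s)
    (hpos : 0 < x i) (h : ∑ j ∈ s, x j = ∑ j ∈ t, x j) : ∃ j ∈ t, 0 < x j := by
  have : ∑ _j ∈ t, (0 : M) < ∑ j ∈ t, x j := by
    rw [sum_const_zero, ← h]
    exact hpos.trans_le (single_le_sum (fun j _ => hx j) hi)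
  exact exists_lt_of_sum_lt this

theorem List.IsChain.sum_map_hd_telescope {V A M : Type*} [AddCommMonoid M] {tl hd : A → V}
    (g : V → M) {a : A} {l : List A} (h : (a :: l).IsChain (fun e f => hd e = tl f)) :
    g (tl a) + ((a :: l).map (g ∘ hd)).sum =
      ((a :: l).map (g ∘ tl)).sum + g (hd ((a :: l).getLast (cons_ne_nil a l))) := by
  induction l generalizing a with
  | nil => simp
  | cons b l ih =>
    obtain ⟨hab, h⟩ := List.isChain_cons_cons.mp h
    have := ih h
    simp only [List.map_cons, List.sum_cons, Function.comp_apply, List.getLast_cons_cons] at this ⊢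
    rw [hab, this, ← add_assoc]

section Paths

variable {V A : Type} (tl hd : A → V) (S C : Finset V)

theorem List.IsChain.nodup_of_rank_lt {rank : V → ℕ} (hacyc : ∀ a, rank (tl a) < rank (hd a))
    {l : List A} (h : l.IsChain (fun e f => hd e = tl f)) : l.Nodup := by
  have : (l.map (rank ∘ tl)).IsChain (· < ·) :=
    List.isChain_map _ |>.mpr (h.imp fun e f hef => by simpa [hef] using hacyc e)
  exact (this.pairwise.nodup).of_map _

theorem IsStPath.nodup {rank : V → ℕ} (hacyc : ∀ a, rank (tl a) < rank (hd a)) {l : List A}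
    (hl : IsStPath tl hd S C l) : l.Nodup := by
  cases l with
  | nil => exact hl.elim
  | cons a l => exact hl.2.1.nodup_of_rank_lt tl hd hacyc

-- The length cap only serves finiteness: by acyclicity every source-to-sink path meets it.
noncomputable def stPaths [Fintype A] : Finset (List A) :=
  ((List.finite_length_le A (Fintype.card A)).inter_of_left {l | IsStPath tl hd S C l}).toFinset

theorem mem_stPaths [Fintype A] {rank : V → ℕ} (hacyc : ∀ a, rank (tl a) < rank (hd a))
    {l : List A} : l ∈ stPaths tl hd S C ↔ IsStPath tl hd S C l := by
  simp only [stPaths, Set.Finite.mem_toFinset, Set.mem_inter_iff, Set.mem_ofPred_eq,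
    and_iff_right_iff_imp]
  exact fun hl => (hl.nodup tl hd S C hacyc).length_le_card

end Paths

section Flows

variable {V A : Type} {M : Type*} [DecidableEq V] [Fintype A] [AddCommGroup M]
  (tl hd : A → V) (S C : Finset V)

def conservativeFlows : AddSubgroup (A → M) where
  carrier := {x | ∀ v, v ∉ S → v ∉ C →
    ∑ a ∈ univ.filter (fun a => hd a = v), x a = ∑ a ∈ univ.filter (fun a => tl a = v), x a}
  add_mem' hx hy v hvS hvC := by
    simp only [Pi.add_apply, sum_add_distrib, hx v hvS hvC, hy v hvS hvC]
  zero_mem' _ _ _ := by simp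
  neg_mem' hx v hvS hvC := by simp only [Pi.neg_apply, sum_neg_distrib, hx v hvS hvC]

variable [DecidableEq A]

def pathFlow (l : List A) (δ : M) (a : A) : M := if a ∈ l then δ else 0

theorem sum_filter_pathFlow {l : List A} (hl : l.Nodup) (δ : M) (f : A → V) (v : V) :
    ∑ a ∈ univ.filter (fun a => f a = v), pathFlow l δ a =
      (l.map fun a => if f a = v then δ else 0).sum := by
  rw [← List.sum_toFinset _ hl, sum_filter, ← univ_inter l.toFinset, ← sum_ite_mem]
  simp only [pathFlow, List.mem_toFinset]
  exact sum_congr rfl fun a _ => by split_ifs <;> rfl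

theorem pathFlow_mem_conservativeFlows {rank : V → ℕ} (hacyc : ∀ a, rank (tl a) < rank (hd a))
    {l : List A} (hl : IsStPath tl hd S C l) (δ : M) :
    pathFlow l δ ∈ conservativeFlows tl hd S C := by
  intro v hvS hvC
  have hnd := hl.nodup tl hd S C hacyc
  rw [sum_filter_pathFlow hnd, sum_filter_pathFlow hnd]
  cases l with
  | nil => exact hl.elim
  | cons a l =>
    obtain ⟨ha, hch, hlast⟩ := hl
    simpa [Function.comp_def, ne_of_mem_of_not_mem ha hvS, ne_of_mem_of_not_mem hlast hvC] using
      hch.sum_map_hd_telescope (fun w => if w = v then δ else 0)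

end Flows

section Decomposition

variable {V A : Type} {M : Type*} [DecidableEq V] [Fintype A] [AddCommGroup M] [LinearOrder M]
  [IsOrderedAddMonoid M] (tl hd : A → V) (S C : Finset V) {rank : V → ℕ} {x : A → M}

theorem exists_pos_out_of_pos_in (hx : 0 ≤ x) (hcons : x ∈ conservativeFlows tl hd S C) {a : A}
    (ha : 0 < x a) (hS : hd a ∉ S) (hC : hd a ∉ C) : ∃ b, tl b = hd a ∧ 0 < x b := by
  obtain ⟨b, hb, hbpos⟩ := exists_pos_of_sum_eq hx (by simp) ha (hcons _ hS hC)
  exact ⟨b, (mem_filter.1 hb).2, hbpos⟩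

theorem exists_pos_in_of_pos_out (hx : 0 ≤ x) (hcons : x ∈ conservativeFlows tl hd S C) {a : A}
    (ha : 0 < x a) (hS : tl a ∉ S) (hC : tl a ∉ C) : ∃ b, hd b = tl a ∧ 0 < x b := by
  obtain ⟨b, hb, hbpos⟩ := exists_pos_of_sum_eq hx (by simp) ha (hcons _ hS hC).symm
  exact ⟨b, (mem_filter.1 hb).2, hbpos⟩

theorem exists_chain_to_sink (hS : ∀ a, hd a ∉ S) (hacyc : ∀ a, rank (tl a) < rank (hd a))
    (hx : 0 ≤ x) (hcons : x ∈ conservativeFlows tl hd S C) (a : A) (ha : 0 < x a) :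
    ∃ l, (a :: l).IsChain (fun e f => hd e = tl f) ∧ (∀ b ∈ a :: l, 0 < x b) ∧
      hd ((a :: l).getLast (List.cons_ne_nil a l)) ∈ C := by
  by_cases hC : hd a ∈ C
  · exact ⟨[], .singleton a, by simpa using ha, hC⟩
  obtain ⟨b, hb, hbpos⟩ := exists_pos_out_of_pos_in tl hd S C hx hcons ha (hS a) hC
  have hrank : rank (hd a) < rank (hd b) := hb ▸ hacyc b
  obtain ⟨l, hch, hpos, hlast⟩ := exists_chain_to_sink hS hacyc hx hcons b hbpos
  exact ⟨b :: l, List.isChain_cons_cons.2 ⟨hb.symm, hch⟩, List.forall_mem_cons.2 ⟨ha, hpos⟩,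
    by simpa using hlast⟩
termination_by univ.sup (fun a => rank (hd a)) - rank (hd a)
decreasing_by have := le_sup (f := fun a => rank (hd a)) (mem_univ b); omega

theorem exists_pos_from_source (hC : ∀ a, tl a ∉ C) (hacyc : ∀ a, rank (tl a) < rank (hd a))
    (hx : 0 ≤ x) (hcons : x ∈ conservativeFlows tl hd S C) (hne : ∃ a, 0 < x a) :
    ∃ a, tl a ∈ S ∧ 0 < x a := by
  obtain ⟨a, ha⟩ := hne
  obtain ⟨a₀, ha₀, hmin⟩ := (univ.filter fun a => 0 < x a).exists_min_image (fun a => rank (tl a))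
    ⟨a, by simpa using ha⟩
  rw [mem_filter] at ha₀
  refine ⟨a₀, by_contra fun hS => ?_, ha₀.2⟩
  obtain ⟨b, hb, hbpos⟩ := exists_pos_in_of_pos_out tl hd S C hx hcons ha₀.2 hS (hC a₀)
  have := hmin b (by simpa using hbpos)
  have := hb ▸ hacyc b
  omega

theorem exists_isStPath_pos (hS : ∀ a, hd a ∉ S) (hC : ∀ a, tl a ∉ C)
    (hacyc : ∀ a, rank (tl a) < rank (hd a)) (hx : 0 ≤ x)
    (hcons : x ∈ conservativeFlows tl hd S C) (hne : ∃ a, 0 < x a) :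
    ∃ l, IsStPath tl hd S C l ∧ ∀ b ∈ l, 0 < x b := by
  obtain ⟨a, haS, ha⟩ := exists_pos_from_source tl hd S C hC hacyc hx hcons hne
  obtain ⟨l, hch, hpos, hlast⟩ := exists_chain_to_sink tl hd S C hS hacyc hx hcons a ha
  exact ⟨a :: l, ⟨haS, hch, hlast⟩, hpos⟩

variable [DecidableEq A]

theorem exists_saturating_pathFlow (hS : ∀ a, hd a ∉ S) (hC : ∀ a, tl a ∉ C)
    (hacyc : ∀ a, rank (tl a) < rank (hd a)) (hx : 0 ≤ x)
    (hcons : x ∈ conservativeFlows tl hd S C) (hne : ∃ a, 0 < x a) :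
    ∃ l δ, IsStPath tl hd S C l ∧ 0 ≤ δ ∧ pathFlow l δ ≤ x ∧
      ∃ m, 0 < x m ∧ pathFlow l δ m = x m := by
  obtain ⟨l, hl, hpos⟩ := exists_isStPath_pos tl hd S C hS hC hacyc hx hcons hne
  have hl₀ : l ≠ [] := by rintro rfl; exact hl
  obtain ⟨m, hm, hmin⟩ := l.toFinset.exists_min_image x (List.toFinset_nonempty_iff _ |>.2 hl₀)
  rw [List.mem_toFinset] at hm
  refine ⟨l, x m, hl, (hpos m hm).le, fun a => ?_, m, hpos m hm, if_pos hm⟩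
  unfold pathFlow
  split_ifs with ha
  · exact hmin a (List.mem_toFinset.2 ha)
  · exact hx a

theorem exists_stPaths_weights (hS : ∀ a, hd a ∉ S) (hC : ∀ a, tl a ∉ C)
    (hacyc : ∀ a, rank (tl a) < rank (hd a)) (x : A → M) (hx : 0 ≤ x)
    (hcons : x ∈ conservativeFlows tl hd S C) :
    ∃ γ : List A → M, 0 ≤ γ ∧ ∀ a, x a = ∑ l ∈ (stPaths tl hd S C).filter (a ∈ ·), γ l := by
  induction hn : #{a | 0 < x a} using Nat.strong_induction_on generalizing x with
  | _ n ih =>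
  by_cases hne : ∃ a, 0 < x a
  · obtain ⟨l, δ, hl, hδ, hle, m, hm, hsat⟩ :=
      exists_saturating_pathFlow tl hd S C hS hC hacyc hx hcons hne
    have hsupp : univ.filter (fun a => 0 < (x - pathFlow l δ) a) ⊂ univ.filter (0 < x ·) := by
      refine (ssubset_iff_of_subset fun a ha => ?_).2 ⟨m, by simpa using hm, by simp [hsat]⟩
      have : 0 ≤ pathFlow l δ a := by unfold pathFlow; split_ifs <;> simp [hδ]
      simp only [mem_filter, mem_univ, true_and, Pi.sub_apply, sub_pos] at ha ⊢
      exact this.trans_lt ha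
    obtain ⟨γ, hγ, hxγ⟩ := ih _ (hn ▸ card_lt_card hsupp) (x - pathFlow l δ) (sub_nonneg.2 hle)
      (sub_mem hcons (pathFlow_mem_conservativeFlows tl hd S C hacyc hl δ)) rfl
    refine ⟨γ + Pi.single l δ, add_nonneg hγ (Pi.single_nonneg.2 hδ), fun a => ?_⟩
    rw [Pi.add_def, sum_add_distrib, ← hxγ, sum_pi_single']
    simp [pathFlow, (mem_stPaths tl hd S C hacyc).2 hl]
  · simp only [not_exists, not_lt] at hne
    exact ⟨0, le_rfl, fun a => by simp [le_antisymm (hne a) (hx a)]⟩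

end Decomposition

theorem flow_path_decomposition_general {V A P : Type}
    [Fintype A] [DecidableEq V] [DecidableEq A]
    (tl hd : A → V) (S C : Finset V)
    (rank : V → ℕ) (hacyc : ∀ a, rank (tl a) < rank (hd a))
    (hS : ∀ a, hd a ∉ S) (hC : ∀ a, tl a ∉ C)
    (x : A → P → ℝ) (hx : ∀ a p, 0 ≤ x a p)
    (hcons : ∀ v, v ∉ S → v ∉ C → ∀ p : P,
      ∑ a ∈ univ.filter (fun a => hd a = v), x a p =
      ∑ a ∈ univ.filter (fun a => tl a = v), x a p) :
    ∃ (Λ : Finset (List A)) (γ : List A → P → ℝ),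
      (∀ l ∈ Λ, IsStPath tl hd S C l) ∧
      (∀ l p, 0 ≤ γ l p) ∧
      (∀ a p, x a p = ∑ l ∈ Λ.filter (fun l => a ∈ l), γ l p) := by
  choose γ hγ hxγ using fun p => exists_stPaths_weights tl hd S C hS hC hacyc (x · p)
    (fun a => hx a p) (fun v hvS hvC => hcons v hvS hvC p)
  exact ⟨stPaths tl hd S C, fun l p => γ p l, fun l hl => (mem_stPaths tl hd S C hacyc).1 hl,
    fun l p => hγ p l, fun a p => hxγ p a⟩

/-- **Flow decomposition.**  Let `x ≥ 0` be a flow on a finite DAG (acyclicity is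
witnessed by a rank function increasing along arcs), where the sources `S` have
no incoming arcs, the sinks `C` have no outgoing arcs, and flow conservation
holds for every product at every node outside `S ∪ C` (so every flow-carrying
arc lies on a source-to-sink path).  Then `x` admits a path decomposition: there
are finitely many source-to-sink paths `λ` and nonnegative weights `γ_λ^p` with
`x(a,p) = ∑_{λ ∋ a} γ_λ^p` for every arc `a` and product `p`. -/
theorem flow_path_decomposition {V A P : Type}
    [Fintype V] [Fintype A] [Fintype P] [DecidableEq V] [DecidableEq A]
    (tl hd : A → V) (S C : Finset V) (hSC : Disjoint S C)
    (rank : V → ℕ) (hacyc : ∀ a, rank (tl a) < rank (hd a))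
    (hS : ∀ a, hd a ∉ S) (hC : ∀ a, tl a ∉ C)
    (x : A → P → ℝ) (hx : ∀ a p, 0 ≤ x a p)
    (hcons : ∀ v, v ∉ S → v ∉ C → ∀ p : P,
      ∑ a ∈ univ.filter (fun a => hd a = v), x a p =
      ∑ a ∈ univ.filter (fun a => tl a = v), x a p) :
    ∃ (Λ : Finset (List A)) (γ : List A → P → ℝ),
      (∀ l ∈ Λ, IsStPath tl hd S C l) ∧
      (∀ l p, 0 ≤ γ l p) ∧
      (∀ a p, x a p = ∑ l ∈ Λ.filter (fun l => a ∈ l), γ l p) :=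
  flow_path_decomposition_general tl hd S C rank hacyc hS hC x hx hcons
end

section
/- The optimal value of the LP relaxation of any K-EMP is a lower bound on the optimal value of the LP relaxation of the LSNDP: for every K-partition of P, LP-opt(K-EMP) ≤ LP-opt(LSNDP). -/
open Finset

variable {A P Wn Cn : Type} [Fintype A] [Fintype P] [Fintype Wn] [Fintype Cn]

/-- LP relaxation of the LSNDP (real-valued vehicle variables). -/
def LsndpLpFeasible {A P Wn Cn : Type}
    [Fintype A] [Fintype P] [Fintype Wn] [Fintype Cn]
    (D : LsndpData A P Wn Cn) (x : A → P → ℝ) (y : A → ℝ) : Prop :=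
  (∀ a, 0 ≤ y a) ∧
  (∀ a p, 0 ≤ x a p) ∧
  (∀ a p, ¬ D.avail a p → x a p = 0) ∧
  (∀ v p, ∑ a ∈ D.inW v, x a p = ∑ a ∈ D.outW v, x a p) ∧
  (∀ cn p, D.d p cn ≤ ∑ a ∈ D.inC cn, x a p) ∧
  (∀ h ∈ D.hold, ∑ p, x h p ≤ D.lim h) ∧
  (∀ a ∈ D.trans, ∑ p, x a p ≤ D.u * y a)

/-- Objective of the LP relaxation of the LSNDP. -/
def LsndpLpObj {A P Wn Cn : Type}
    [Fintype A] [Fintype P] [Fintype Wn] [Fintype Cn]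
    (D : LsndpData A P Wn Cn) (x : A → P → ℝ) (y : A → ℝ) : ℝ :=
  (∑ a ∈ D.trans, D.f a * y a) + FlowCost D x

/-- Optimal value of the LP relaxation of the LSNDP. -/
noncomputable def LsndpLpOpt {A P Wn Cn : Type}
    [Fintype A] [Fintype P] [Fintype Wn] [Fintype Cn]
    (D : LsndpData A P Wn Cn) : ℝ :=
  sInf {v | ∃ x y, LsndpLpFeasible D x y ∧ LsndpLpObj D x y = v}

/-- LP relaxation of the K-EMP (real-valued vehicle variables). -/
def KempLpFeasible {A P Wn Cn : Type}
    [Fintype A] [Fintype P] [Fintype Wn] [Fintype Cn]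
    {K : Type} [Fintype K] [DecidableEq K] (D : LsndpData A P Wn Cn)
    (cls : P → K) (x : A → K → ℝ) (y : A → ℝ) (z : ℝ) : Prop :=
  (∀ a, 0 ≤ y a) ∧
  (∀ a k, 0 ≤ x a k) ∧
  (∀ a k, ¬ KAvail D cls a k → x a k = 0) ∧
  (∀ v k, ∑ a ∈ D.inW v, x a k = ∑ a ∈ D.outW v, x a k) ∧
  (∀ cn k, Kdem D cls k cn ≤ ∑ a ∈ D.inC cn, x a k) ∧
  (∀ h ∈ D.hold, ∑ k, x h k ≤ D.lim h) ∧
  (∀ a ∈ D.trans, ∑ k, x a k ≤ D.u * y a) ∧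
  KFlowCost D x ≤ z

/-- Optimal value of the LP relaxation of the K-EMP. -/
noncomputable def KempLpOpt {A P Wn Cn : Type}
    [Fintype A] [Fintype P] [Fintype Wn] [Fintype Cn]
    {K : Type} [Fintype K] [DecidableEq K]
    (D : LsndpData A P Wn Cn) (cls : P → K) : ℝ :=
  sInf {v | ∃ x y z, KempLpFeasible D cls x y z ∧
    ((∑ a ∈ D.trans, D.f a * y a) + z) = v}

/-- The aggregation map sends any feasible solution of the LP relaxation of the
LSNDP to a feasible solution of the LP relaxation of the K-EMP with the same
objective value; hence `LP-opt(K-EMP) ≤ LP-opt(LSNDP)` for every K-partition. -/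
theorem kemp_lp_relaxation_bound {A P Wn Cn : Type}
    [Fintype A] [Fintype P] [Fintype Wn] [Fintype Cn]
    {K : Type} [Fintype K] [DecidableEq K]
    (D : LsndpData A P Wn Cn) (cls : P → K)
    (hf : ∀ a, 0 ≤ D.f a) (hc : ∀ a, 0 ≤ D.c a)
    (hfeas : ∃ x y, LsndpLpFeasible D x y) :
    (∀ x y, LsndpLpFeasible D x y →
      KempLpFeasible D cls (aggFlow cls x) y (KFlowCost D (aggFlow cls x)) ∧
      (∑ a ∈ D.trans, D.f a * y a) + KFlowCost D (aggFlow cls x) = LsndpLpObj D x y) ∧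
    KempLpOpt D cls ≤ LsndpLpOpt D := by
  have key : ∀ x y, LsndpLpFeasible D x y →
      KempLpFeasible D cls (aggFlow cls x) y (KFlowCost D (aggFlow cls x)) ∧
      (∑ a ∈ D.trans, D.f a * y a) + KFlowCost D (aggFlow cls x) = LsndpLpObj D x y := by
    intro x y hxy
    obtain ⟨hy, hx, hav, hcons, hdem, hhold, hcap⟩ := hxy
    have hsum : ∀ a, ∑ k, aggFlow cls x a k = ∑ p, x a p := by
      intro a
      exact Finset.sum_fiberwise (univ) cls (fun p => x a p)
    have hfc : KFlowCost D (aggFlow cls x) = FlowCost D x := by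
      unfold KFlowCost FlowCost
      refine Finset.sum_congr rfl fun a _ => ?_
      rw [← Finset.mul_sum, hsum, Finset.mul_sum]
    constructor
    · refine ⟨hy, ?_, ?_, ?_, ?_, ?_, ?_, le_refl _⟩
      · intro a k
        exact Finset.sum_nonneg fun p _ => hx a p
      · intro a k hk
        refine Finset.sum_eq_zero fun p hp => ?_
        simp only [Finset.mem_filter] at hp
        exact hav a p fun h => hk ⟨p, hp.2, h⟩
      · intro v k
        unfold aggFlow
        rw [Finset.sum_comm, Finset.sum_comm (s := D.outW v)]
        exact Finset.sum_congr rfl fun p _ => hcons v p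
      · intro cn k
        unfold Kdem aggFlow
        rw [Finset.sum_comm]
        exact Finset.sum_le_sum fun p _ => hdem cn p
      · intro h hh
        rw [hsum]; exact hhold h hh
      · intro a ha
        rw [hsum]; exact hcap a ha
    · rw [hfc]; rfl
  refine ⟨key, ?_⟩
  obtain ⟨x0, y0, hfeas0⟩ := hfeas
  apply csInf_le_csInf
  · refine ⟨0, fun v hv => ?_⟩
    obtain ⟨x, y, z, ⟨hy, hx, _, _, _, _, _, hz⟩, hv⟩ := hv
    have h1 : (0:ℝ) ≤ ∑ a ∈ D.trans, D.f a * y a :=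
      Finset.sum_nonneg fun a _ => mul_nonneg (hf a) (hy a)
    have h2 : (0:ℝ) ≤ KFlowCost D x :=
      Finset.sum_nonneg fun a _ => Finset.sum_nonneg fun k _ =>
        mul_nonneg (hc a) (hx a k)
    linarith
  · exact ⟨_, x0, y0, hfeas0, rfl⟩
  · rintro v ⟨x, y, hxy, hv⟩
    obtain ⟨hK, hobj⟩ := key x y hxy
    exact ⟨aggFlow cls x, y, _, hK, by rw [hobj, hv]⟩
end

section
/- Refining a partition increases the super-product-count monotonically in bound strength along a chain of refinements: if partition Q refines partition Q' (every part of Q is contained in a part of Q'), then every feasible solution of the EMP associated to Q aggregates to a feasible solution of the EMP associated to Q' with equal objective value, so opt(EMP(Q')) ≤ opt(EMP(Q)). -/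
open Finset

variable {A P Wn Cn : Type} [Fintype A] [Fintype P] [Fintype Wn] [Fintype Cn]

/-- **Refinement monotonicity.**  If the partition given by `cls' : P → K'`
refines the partition given by `g ∘ cls' : P → K` (every part of the finer
partition is contained in the part of the coarser one indexed by its image under
`g`), then every feasible solution of the EMP for the finer partition aggregates
(summing super-product flows over the parts merged by `g`) to a feasible
solution of the EMP for the coarser partition with the same `y` and `z`, hence
the same objective value; so `opt(EMP(coarser)) ≤ opt(EMP(finer))`. -/
theorem kemp_refinement_monotone {A P Wn Cn : Type}
    [Fintype A] [Fintype P] [Fintype Wn] [Fintype Cn]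
    {K K' : Type} [Fintype K] [DecidableEq K] [Fintype K'] [DecidableEq K']
    (D : LsndpData A P Wn Cn) (cls' : P → K') (g : K' → K)
    (hf : ∀ a, 0 ≤ D.f a) (hc : ∀ a, 0 ≤ D.c a)
    (hfeas : ∃ x y z, KempFeasible D cls' x y z) :
    (∀ x y z, KempFeasible D cls' x y z →
      KempFeasible D (g ∘ cls')
        (fun a k => ∑ k' ∈ univ.filter (fun k' => g k' = k), x a k') y z ∧
      KempObj D y z = KempObj D y z) ∧
    KempOpt D (g ∘ cls') ≤ KempOpt D cls' := by
  have key : ∀ x y z, KempFeasible D cls' x y z →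
      KempFeasible D (g ∘ cls')
        (fun a k => ∑ k' ∈ univ.filter (fun k' => g k' = k), x a k') y z := by
    rintro x y z ⟨hpos, hav, hcons, hdem, hstor, hcap, hcost⟩
    refine ⟨?_, ?_, ?_, ?_, ?_, ?_, ?_⟩
    · intro a k
      exact Finset.sum_nonneg fun k' _ => hpos a k'
    · intro a k hk
      refine Finset.sum_eq_zero fun k' hk' => ?_
      simp only [mem_filter, mem_univ, true_and] at hk'
      apply hav
      rintro ⟨p, hp, hpav⟩
      exact hk ⟨p, by simp [Function.comp, hp, hk'], hpav⟩
    · intro v k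
      rw [Finset.sum_comm, Finset.sum_comm (s := D.outW v)]
      exact Finset.sum_congr rfl fun k' _ => hcons v k'
    · intro cn k
      have hK : Kdem D (g ∘ cls') k cn
          = ∑ k' ∈ univ.filter (fun k' => g k' = k), Kdem D cls' k' cn := by
        unfold Kdem
        rw [← Finset.sum_fiberwise_of_maps_to
          (g := cls') (t := univ.filter (fun k' => g k' = k))
          (fun p hp => by
            simp only [mem_filter, mem_univ, true_and, Function.comp] at hp ⊢
            exact hp)]
        refine Finset.sum_congr rfl fun k' hk' => ?_
        simp only [mem_filter, mem_univ, true_and] at hk'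
        refine Finset.sum_congr ?_ fun _ _ => rfl
        ext p
        simp only [mem_filter, mem_univ, true_and, Function.comp]
        constructor
        · rintro ⟨_, h⟩; exact h
        · intro h; exact ⟨by rw [h, hk'], h⟩
      rw [hK, Finset.sum_comm]
      exact Finset.sum_le_sum fun k' _ => hdem cn k'
    · intro h hh
      calc ∑ k, ∑ k' ∈ univ.filter (fun k' => g k' = k), x h k'
          = ∑ k', x h k' := Finset.sum_fiberwise univ g (x h)
        _ ≤ D.lim h := hstor h hh
    · intro a ha
      calc ∑ k, ∑ k' ∈ univ.filter (fun k' => g k' = k), x a k'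
          = ∑ k', x a k' := Finset.sum_fiberwise univ g (x a)
        _ ≤ D.u * (y a : ℝ) := hcap a ha
    · have : KFlowCost D (fun a k => ∑ k' ∈ univ.filter (fun k' => g k' = k), x a k')
          = KFlowCost D x := by
        unfold KFlowCost
        refine Finset.sum_congr rfl fun a _ => ?_
        simp only [Finset.mul_sum]
        exact Finset.sum_fiberwise univ g (fun k' => D.c a * x a k')
      rw [this]; exact hcost
  refine ⟨fun x y z h => ⟨key x y z h, rfl⟩, ?_⟩
  unfold KempOpt
  apply csInf_le_csInf
  · refine ⟨0, ?_⟩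
    rintro v ⟨x, y, z, ⟨hpos, _, _, _, _, _, hcost⟩, rfl⟩
    unfold KempObj
    have h1 : (0:ℝ) ≤ ∑ a ∈ D.trans, D.f a * (y a : ℝ) :=
      Finset.sum_nonneg fun a _ => mul_nonneg (hf a) (Nat.cast_nonneg _)
    have h2 : (0:ℝ) ≤ z := le_trans (Finset.sum_nonneg fun a _ =>
      Finset.sum_nonneg fun k _ => mul_nonneg (hc a) (hpos a k)) hcost
    linarith
  · obtain ⟨x, y, z, h⟩ := hfeas
    exact ⟨KempObj D y z, x, y, z, h, rfl⟩
  · rintro v ⟨x, y, z, h, rfl⟩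
    exact ⟨_, y, z, key x y z h, rfl⟩
end
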